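/- Let λ₁, λ₂ > 0, let x > 0, and let y, α be real numbers with 0 < y < α < (λ₁/λ₂) x. Then (λ₁ x² + λ₂ y²)/(x + y)² ≥ (1 + ε) · λ₁λ₂/(λ₁ + λ₂), where ε = (λ₁ x − λ₂ α)² / ( λ₁ λ₂ (x + α)² ). -/

import Mathlib

/-! Since `(λ₁ + λ₂)(λ₁x² + λ₂y²) = λ₁λ₂(x + y)² + (λ₁x - λ₂y)²`, the quotient equals
`(1 + r(y)² / (λ₁λ₂)) · λ₁λ₂/(λ₁ + λ₂)` with `r(t) = (λ₁x - λ₂t)/(x + t)`. The function `r` is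
antitone on `t > -x` and nonnegative for `t ≤ (λ₁/λ₂)x`, so `r(α)² ≤ r(y)²`. -/

open Set

lemma two_term_mean_eq {l₁ l₂ : ℝ} (hl₁ : l₁ ≠ 0) (hl₂ : l₂ ≠ 0) (hsum : l₁ + l₂ ≠ 0) {x y : ℝ}
    (hxy : x + y ≠ 0) :
    (l₁*x^2 + l₂*y^2)/(x + y)^2
      = (1 + ((l₁*x - l₂*y)/(x + y))^2/(l₁*l₂)) * (l₁*l₂/(l₁ + l₂)) := by
  field_simp
  ring

lemma antitoneOn_sub_mul_div_add {l₁ l₂ x : ℝ} (h : 0 ≤ (l₁ + l₂) * x) :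
    AntitoneOn (fun t => (l₁*x - l₂*t)/(x + t)) (Ioi (-x)) := by
  intro a ha b hb hab
  simp only [mem_Ioi] at ha hb
  rw [div_le_div_iff₀ (by linarith) (by linarith)]
  nlinarith [mul_nonneg h (sub_nonneg.2 hab)]

theorem refined_two_term_mean_inequality
    (l₁ l₂ x y α : ℝ)
    (hl₁ : 0 < l₁) (hl₂ : 0 < l₂) (hx : 0 < x)
    (hy : 0 < y) (hyα : y < α) (hαx : α < (l₁/l₂)*x) :
    (l₁*x^2 + l₂*y^2)/(x + y)^2
      ≥ (1 + (l₁*x - l₂*α)^2/(l₁*l₂*(x + α)^2)) * (l₁*l₂/(l₁ + l₂)) := by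
  have hrα : 0 ≤ (l₁*x - l₂*α)/(x + α) := by
    rw [div_mul_eq_mul_div, lt_div_iff₀ hl₂] at hαx
    exact div_nonneg (by linarith) (by linarith)
  have hr : (l₁*x - l₂*α)/(x + α) ≤ (l₁*x - l₂*y)/(x + y) :=
    antitoneOn_sub_mul_div_add (by positivity) (mem_Ioi.2 (by linarith))
      (mem_Ioi.2 (by linarith)) hyα.le
  have hεα : (l₁*x - l₂*α)^2/(l₁*l₂*(x + α)^2) = ((l₁*x - l₂*α)/(x + α))^2/(l₁*l₂) := by
    rw [div_pow, div_div, mul_comm ((x + α)^2)]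
  rw [ge_iff_le, two_term_mean_eq hl₁.ne' hl₂.ne' (by positivity) (by positivity), hεα]
  gcongr
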